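/- arXiv:1801.05008 — 2 statements merged into one kernel-verified Lean document; each statement's English description precedes it below -/
import Mathlib

section
/- Let α ≥ 2. Then (1/2)·C(α−1) ≤ (C(α)/(1+2α))·(1 + 2/√α), where C(β) = ∫₀^∞ t^β / sinh t dt. -/
open MeasureTheory Filter Real

/-- `C(β) = ∫₀^∞ t^β / sinh t dt`. -/
noncomputable def Cconst (β : ℝ) : ℝ :=
  ∫ t in Set.Ioi (0:ℝ), t ^ β / Real.sinh t

/-!
Expanding `1 / sinh t = 2 ∑ₙ exp (-(2n+1) t)` and integrating termwise gives
`C(β) = 2 Γ(β+1) λ(β+1)`, where `λ(s) = ∑ₙ (2n+1)^(-s)` is Dirichlet's lambda function.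
As `Γ(α+1) = α Γ(α)`, the inequality becomes `λ(α) (1 + 2α) ≤ (2α + 4√α) λ(α+1)`, which follows
from `λ(α+1) ≥ 1`, from `λ(α) ≤ 1 + (π²/24) 3^(2-α)`, obtained by comparing the tail
`∑ₙ₌₁ (2n+1)^(-α)` with `3^(2-α) ∑ₙ₌₁ (2n+1)^(-2) ≤ 3^(2-α) ζ(2) / 4`, and from
`(1 + 2α) 3^(2-α) ≤ 5`.
-/

open Set

noncomputable def dirichletLambda (s : ℝ) : ℝ :=
  ∑' n : ℕ, (1 / (2 * n + 1 : ℝ)) ^ s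

theorem hasSum_two_mul_exp_neg_odd_mul {t : ℝ} (ht : 0 < t) :
    HasSum (fun n : ℕ => 2 * exp (-((2 * n + 1) * t))) (sinh t)⁻¹ := by
  have hterm : (fun n : ℕ => 2 * exp (-((2 * n + 1) * t)))
      = fun n => 2 * exp (-t) * exp (-(2 * t)) ^ n := by
    funext n
    rw [← exp_nat_mul, mul_assoc, ← exp_add]
    ring_nf
  have hsum : (sinh t)⁻¹ = 2 * exp (-t) * (1 - exp (-(2 * t)))⁻¹ := by
    have : exp t ^ 2 - 1 ≠ 0 := by nlinarith [one_lt_exp_iff.mpr ht]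
    rw [sinh_eq, exp_neg, show 2 * t = t + t by ring, exp_neg, exp_add]
    field_simp
  rw [hterm, hsum]
  exact (hasSum_geometric_of_lt_one (exp_nonneg _) (exp_lt_one_iff.mpr (by linarith))).mul_left _

theorem summable_one_div_two_mul_add_one_rpow {s : ℝ} (hs : 1 < s) :
    Summable fun n : ℕ => (1 / (2 * n + 1 : ℝ)) ^ s := by
  refine .of_nonneg_of_le (fun n => by positivity) (fun n => ?_)
    ((Real.summable_one_div_nat_add_rpow (1 / 2) s).mpr hs)
  rw [div_rpow zero_le_one (by positivity), one_rpow, abs_of_pos (by positivity)]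
  gcongr <;> linarith [(Nat.cast_nonneg n : (0 : ℝ) ≤ n)]

theorem one_le_dirichletLambda {s : ℝ} (hs : 1 < s) : 1 ≤ dirichletLambda s := by
  simpa [dirichletLambda] using (summable_one_div_two_mul_add_one_rpow hs).le_tsum 0 (fun n _ => by positivity)

theorem Cconst_eq_two_mul_Gamma_mul_dirichletLambda {β : ℝ} (hβ : 0 < β) :
    Cconst β = 2 * Gamma (β + 1) * dirichletLambda (β + 1) := by
  set F : ℕ → ℝ → ℝ := fun n t => 2 * (t ^ β * exp (-((2 * n + 1) * t)))
  have hF_integral (n : ℕ) :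
      ∫ t in Ioi 0, F n t = 2 * Gamma (β + 1) * (1 / (2 * n + 1 : ℝ)) ^ (β + 1) := by
    have := integral_rpow_mul_exp_neg_mul_Ioi (a := β + 1) (r := 2 * n + 1) (by linarith)
      (by positivity)
    rw [add_sub_cancel_right] at this
    simp only [F, integral_const_mul, this]
    ring
  have hF_int (n : ℕ) : Integrable (F n) (volume.restrict (Ioi 0)) :=
    .of_integral_ne_zero (by rw [hF_integral]; positivity)
  have hF_norm (n : ℕ) : ∫ t in Ioi 0, ‖F n t‖ = ∫ t in Ioi 0, F n t :=
    setIntegral_congr_fun measurableSet_Ioi fun t (ht : 0 < t) => norm_of_nonneg (by positivity)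
  have hF_sum : HasSum (fun n => ∫ t in Ioi 0, F n t) (∫ t in Ioi 0, ∑' n, F n t) := by
    refine hasSum_integral_of_summable_integral_norm hF_int ?_
    simp only [hF_norm, hF_integral]
    exact (summable_one_div_two_mul_add_one_rpow (by linarith)).mul_left _
  have hF_tsum : ∀ t ∈ Ioi (0 : ℝ), t ^ β / sinh t = ∑' n, F n t := fun t ht => by
    rw [div_eq_mul_inv, ← ((hasSum_two_mul_exp_neg_odd_mul ht).mul_left (t ^ β)).tsum_eq]
    simp only [F]
    congr 1; funext n; ring
  rw [Cconst, setIntegral_congr_fun measurableSet_Ioi hF_tsum, ← hF_sum.tsum_eq,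
    tsum_congr hF_integral, tsum_mul_left, dirichletLambda]

theorem hasSum_one_div_nat_add_one_sq :
    HasSum (fun n : ℕ => 1 / ((n : ℝ) + 1) ^ 2) (π ^ 2 / 6) := by
  have := (hasSum_nat_add_iff (f := fun n : ℕ => 1 / (n : ℝ) ^ 2) 1).mpr
    (by simpa using hasSum_zeta_two)
  exact_mod_cast this

theorem dirichletLambda_le_one_add {s : ℝ} (hs : 2 ≤ s) :
    dirichletLambda s ≤ 1 + π ^ 2 / 24 * 3 ^ (2 - s) := by
  have hsum := summable_one_div_two_mul_add_one_rpow (by linarith : 1 < s)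
  have hterm (n : ℕ) : (1 / (2 * ((n + 1 : ℕ) : ℝ) + 1)) ^ s
      ≤ 3 ^ (2 - s) / 4 * (1 / ((n : ℝ) + 1) ^ 2) := by
    set x : ℝ := 1 / (2 * ((n + 1 : ℕ) : ℝ) + 1)
    have hx : 0 < x := by positivity
    have hx3 : x ≤ 1 / 3 := by
      refine one_div_le_one_div_of_le (by norm_num) ?_
      push_cast
      linarith [(Nat.cast_nonneg n : (0 : ℝ) ≤ n)]
    have hx_sq : x ^ 2 ≤ 1 / 4 * (1 / ((n : ℝ) + 1) ^ 2) := by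
      have : x ≤ 1 / (2 * ((n : ℝ) + 1)) :=
        one_div_le_one_div_of_le (by positivity) (by push_cast; linarith)
      calc x ^ 2 ≤ (1 / (2 * ((n : ℝ) + 1))) ^ 2 := by gcongr
        _ = 1 / 4 * (1 / ((n : ℝ) + 1) ^ 2) := by field_simp; ring
    calc x ^ s = x ^ (s - 2) * x ^ 2 := by
          rw [← rpow_natCast, ← rpow_add hx]; norm_num
      _ ≤ (1 / 3) ^ (s - 2) * (1 / 4 * (1 / ((n : ℝ) + 1) ^ 2)) := by
          gcongr
      _ = 3 ^ (2 - s) / 4 * (1 / ((n : ℝ) + 1) ^ 2) := by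
          rw [one_div, inv_rpow (by norm_num), ← rpow_neg (by norm_num), neg_sub]; ring
  have htail := hasSum_le hterm ((summable_nat_add_iff 1).mpr hsum).hasSum
    (hasSum_one_div_nat_add_one_sq.mul_left (3 ^ (2 - s) / 4))
  rw [dirichletLambda, hsum.tsum_eq_zero_add]
  norm_num at htail ⊢
  linarith

theorem one_add_two_mul_mul_three_rpow_le {s : ℝ} (hs : 2 ≤ s) :
    (1 + 2 * s) * 3 ^ (2 - s) ≤ 5 := by
  have hlog : 1 ≤ log 3 := by linarith [log_three_gt_d9]
  have hgrowth : s - 1 ≤ 3 ^ (s - 2) := by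
    rw [rpow_def_of_pos (by norm_num)]
    nlinarith [add_one_le_exp (log 3 * (s - 2))]
  rw [show 2 - s = -(s - 2) by ring, rpow_neg (by norm_num), ← div_eq_mul_inv,
    div_le_iff₀ (by positivity)]
  linarith

theorem dirichletLambda_mul_le {s : ℝ} (hs : 2 ≤ s) :
    dirichletLambda s * (1 + 2 * s) ≤ 2 * s + 4 * √s := by
  have hπ : π ^ 2 ≤ 10 := by nlinarith [pi_lt_d2, pi_pos]
  have hsqrt : (1.41 : ℝ) ≤ √s := by
    rw [le_sqrt (by norm_num) (by linarith)]
    linarith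
  have hdecay := one_add_two_mul_mul_three_rpow_le hs
  calc dirichletLambda s * (1 + 2 * s)
      ≤ (1 + π ^ 2 / 24 * 3 ^ (2 - s)) * (1 + 2 * s) := by
        gcongr; exact dirichletLambda_le_one_add hs
    _ = 1 + 2 * s + π ^ 2 / 24 * ((1 + 2 * s) * 3 ^ (2 - s)) := by ring
    _ ≤ 1 + 2 * s + 10 / 24 * 5 := by gcongr
    _ ≤ 2 * s + 4 * √s := by linarith

theorem stmt_12 (α : ℝ) (hα : 2 ≤ α) :
    (1 / 2) * Cconst (α - 1) ≤ (Cconst α / (1 + 2 * α)) * (1 + 2 / Real.sqrt α) := by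
  have hα0 : 0 < α := by linarith
  rw [Cconst_eq_two_mul_Gamma_mul_dirichletLambda (by linarith), sub_add_cancel,
    Cconst_eq_two_mul_Gamma_mul_dirichletLambda hα0, Gamma_add_one hα0.ne']
  calc 1 / 2 * (2 * Gamma α * dirichletLambda α) = Gamma α * dirichletLambda α := by ring
    _ ≤ Gamma α * ((2 * α + 4 * √α) / (1 + 2 * α)) := by
        gcongr
        rw [le_div_iff₀ (by linarith)]
        exact dirichletLambda_mul_le hα
    _ = 2 * (α * Gamma α) * 1 / (1 + 2 * α) * (1 + 2 / √α) := by
        field_simp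
        linear_combination 4 * mul_self_sqrt hα0.le
    _ ≤ 2 * (α * Gamma α) * dirichletLambda (α + 1) / (1 + 2 * α) * (1 + 2 / √α) := by
        gcongr
        exact one_le_dirichletLambda (by linarith)
end

section
/- Let α > 2 be fixed and let x > 0. Then F₁(α,x) ≤ F(α,x) ≤ F₂(α,x), where F(α,x) = ∫₀^∞ t^α / (sinh(xt) · (1 + t²)) dt, F₁(α,x) = (2 − 2^{−α}) · Z(α+1) · G(α,x), F₂(α,x) = (2 − 2^{2−α}) · Z(α−1) · G(α,x), G(α,x) = ∫₀^∞ t^α · e^{−xt} / (1 + t²) dt, and Z(s) = Σ_{n=1}^∞ 1/n^s. -/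
open MeasureTheory Filter Real

/-- `Z(s) = Σ_{n=1}^∞ 1/n^s` (the Riemann zeta function for real `s > 1`). -/
noncomputable def Zfun (s : ℝ) : ℝ :=
  ∑' n : ℕ+, 1 / (n : ℝ) ^ s

/-- `F(α,x) = ∫₀^∞ t^α / (sinh(xt)·(1+t²)) dt`. -/
noncomputable def Ffun (α x : ℝ) : ℝ :=
  ∫ t in Set.Ioi (0:ℝ), t ^ α / (Real.sinh (x * t) * (1 + t ^ 2))

/-- `G(α,x) = ∫₀^∞ t^α·e^{−xt}/(1+t²) dt`. -/
noncomputable def Gfun (α x : ℝ) : ℝ :=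
  ∫ t in Set.Ioi (0:ℝ), t ^ α * Real.exp (-(x * t)) / (1 + t ^ 2)

/-! Since `1 / sinh u = 2 ∑_{k ≥ 0} e^{-(2k+1)u}` for `u > 0`, integrating termwise gives
`F(α,x) = 2 ∑_k G(α,(2k+1)x)`. The substitution `t = u / c` gives
`G(α,cx) = c^{-(α+1)} ∫₀^∞ u^α e^{-xu} / (1 + (u/c)²) du`, and for `c ≥ 1` the denominator
`1 + (u/c)²` lies between `(1 + u²) / c²` and `1 + u²`; hence
`c^{-(α+1)} G(α,x) ≤ G(α,cx) ≤ c^{-(α-1)} G(α,x)`. Summing over odd `c` with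
`∑_k (2k+1)^{-s} = (1 - 2^{-s}) Z(s)` gives both bounds. -/

open Set

lemma Zfun_eq_tsum_rpow_neg {s : ℝ} (hs : s ≠ 0) : Zfun s = ∑' n : ℕ, (n : ℝ) ^ (-s) := by
  have h0 : (fun n : ℕ => (n : ℝ) ^ (-s)) 0 = 0 := by
    simp only [Nat.cast_zero]; exact zero_rpow (neg_ne_zero.mpr hs)
  rw [← tsum_pnat_eq_tsum_of_eq_zero h0, Zfun]
  exact tsum_congr fun n => by rw [rpow_neg n.val.cast_nonneg, one_div]

lemma hasSum_odd_rpow_neg {s : ℝ} (hs : 1 < s) :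
    HasSum (fun k : ℕ => (2 * k + 1 : ℝ) ^ (-s)) ((1 - 2 ^ (-s)) * Zfun s) := by
  have hsum : Summable fun n : ℕ => (n : ℝ) ^ (-s) := by
    simpa [rpow_neg (Nat.cast_nonneg _)] using summable_nat_rpow_inv.mpr hs
  have hZ : HasSum (fun n : ℕ => (n : ℝ) ^ (-s)) (Zfun s) := by
    rw [Zfun_eq_tsum_rpow_neg (by linarith)]
    exact hsum.hasSum
  have heven : HasSum (fun k : ℕ => ((2 * k : ℕ) : ℝ) ^ (-s)) (2 ^ (-s) * Zfun s) := by
    have hfun : (fun k : ℕ => ((2 * k : ℕ) : ℝ) ^ (-s)) =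
        fun k : ℕ => 2 ^ (-s) * (k : ℝ) ^ (-s) := by
      ext k
      push_cast
      exact mul_rpow zero_le_two k.cast_nonneg
    rw [hfun]
    exact hZ.mul_left _
  have hodd : Summable fun k : ℕ => ((2 * k + 1 : ℕ) : ℝ) ^ (-s) :=
    hsum.comp_injective fun a b h => by omega
  have hsplit :=
    (HasSum.even_add_odd (f := fun n : ℕ => (n : ℝ) ^ (-s)) heven hodd.hasSum).unique hZ
  rw [show (1 - 2 ^ (-s)) * Zfun s = ∑' k : ℕ, ((2 * k + 1 : ℕ) : ℝ) ^ (-s) by linarith]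
  exact_mod_cast hodd.hasSum

lemma hasSum_two_mul_odd_rpow_neg {s : ℝ} (hs : 1 < s) :
    HasSum (fun k : ℕ => 2 * (2 * k + 1 : ℝ) ^ (-s)) ((2 - 2 ^ (1 - s)) * Zfun s) := by
  rw [sub_eq_add_neg 1 s, rpow_add two_pos, rpow_one,
    show (2 - 2 * 2 ^ (-s)) * Zfun s = 2 * ((1 - 2 ^ (-s)) * Zfun s) by ring]
  exact (hasSum_odd_rpow_neg hs).mul_left 2

lemma hasSum_inv_sinh {u : ℝ} (hu : 0 < u) :
    HasSum (fun k : ℕ => 2 * exp (-((2 * k + 1) * u))) (sinh u)⁻¹ := by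
  set q := exp (-u) with hq
  have hq0 : 0 < q := exp_pos _
  have hq1 : q < 1 := exp_lt_one_iff.mpr (by linarith)
  have hterm : ∀ k : ℕ, 2 * exp (-((2 * k + 1) * u)) = 2 * q * (q ^ 2) ^ k := by
    intro k
    rw [mul_assoc, ← pow_mul, ← pow_succ', hq, ← exp_nat_mul]
    push_cast; ring_nf
  have hsinh : (sinh u)⁻¹ = 2 * q * (1 - q ^ 2)⁻¹ := by
    have : 0 < 1 - q ^ 2 := by nlinarith
    rw [sinh_eq, hq, exp_neg u]
    field_simp
  simp_rw [hterm, hsinh]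
  exact (hasSum_geometric_of_lt_one (by positivity) (by nlinarith)).mul_left (2 * q)

lemma integrableOn_rpow_mul_exp_neg_mul_div {α b : ℝ} {D : ℝ → ℝ} (hα : -1 < α) (hb : 0 < b)
    (hD : Continuous D) (hD1 : ∀ u, 1 ≤ D u) :
    IntegrableOn (fun u : ℝ => u ^ α * exp (-(b * u)) / D u) (Ioi 0) := by
  have hbase : IntegrableOn (fun u : ℝ => u ^ α * exp (-(b * u))) (Ioi 0) := by
    simpa [rpow_one, neg_mul] using integrableOn_rpow_mul_exp_neg_mul_rpow hα one_pos hb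
  refine hbase.mono' ?_ ?_
  · refine ContinuousOn.aestronglyMeasurable ?_ measurableSet_Ioi
    refine ContinuousOn.div ?_ hD.continuousOn fun u _ => (one_pos.trans_le (hD1 u)).ne'
    exact (continuousOn_id.rpow_const fun u hu => Or.inl (ne_of_gt hu)).mul (by fun_prop)
  · filter_upwards [ae_restrict_mem measurableSet_Ioi] with u hu
    have hu0 : (0 : ℝ) < u := hu
    rw [norm_of_nonneg (div_nonneg (by positivity) (zero_le_one.trans (hD1 u)))]
    exact div_le_self (by positivity) (hD1 u)

lemma Gfun_nonneg (α x : ℝ) : 0 ≤ Gfun α x :=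
  setIntegral_nonneg measurableSet_Ioi fun t (ht : 0 < t) => by positivity

lemma integrableOn_Gfun_integrand {α x : ℝ} (hα : -1 < α) (hx : 0 < x) :
    IntegrableOn (fun t : ℝ => t ^ α * exp (-(x * t)) / (1 + t ^ 2)) (Ioi 0) :=
  integrableOn_rpow_mul_exp_neg_mul_div hα hx (by fun_prop) fun t => by nlinarith

lemma Gfun_mul_eq {α x c : ℝ} (hc : 0 < c) :
    Gfun α (c * x) =
      c ^ (-(α + 1)) * ∫ u in Ioi 0, u ^ α * exp (-(x * u)) / (1 + (u / c) ^ 2) := by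
  set g : ℝ → ℝ := fun u => u ^ α * exp (-(x * u)) / (1 + (u / c) ^ 2)
  have hpoint : ∀ t ∈ Ioi (0 : ℝ),
      t ^ α * exp (-(c * x * t)) / (1 + t ^ 2) = c ^ (-α) * g (c * t) := by
    intro t (ht : 0 < t)
    simp only [g, mul_div_cancel_left₀ t hc.ne', mul_rpow hc.le ht.le, rpow_neg hc.le]
    have : 0 < c ^ α := rpow_pos_of_pos hc α
    field_simp
  rw [Gfun, setIntegral_congr_fun measurableSet_Ioi hpoint, integral_const_mul,
    integral_comp_mul_left_Ioi g 0 hc, mul_zero, smul_eq_mul, ← mul_assoc, ← rpow_neg_one c,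
    ← rpow_add hc]
  ring_nf

lemma rpow_mul_Gfun_le_Gfun_mul {α x c : ℝ} (hα : -1 < α) (hx : 0 < x) (hc : 1 ≤ c) :
    c ^ (-(α + 1)) * Gfun α x ≤ Gfun α (c * x) := by
  have hc0 : 0 < c := one_pos.trans_le hc
  rw [Gfun_mul_eq hc0]
  gcongr
  refine setIntegral_mono_on (integrableOn_Gfun_integrand hα hx)
    (integrableOn_rpow_mul_exp_neg_mul_div hα hx (by fun_prop) fun u => by nlinarith)
    measurableSet_Ioi fun u (hu : 0 < u) => ?_
  have : (u / c) ^ 2 ≤ u ^ 2 := by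
    gcongr
    exact div_le_self hu.le hc
  gcongr

lemma Gfun_mul_le_rpow_mul_Gfun {α x c : ℝ} (hα : -1 < α) (hx : 0 < x) (hc : 1 ≤ c) :
    Gfun α (c * x) ≤ c ^ (-(α - 1)) * Gfun α x := by
  have hc0 : 0 < c := one_pos.trans_le hc
  have hbound :
      ∫ u in Ioi 0, u ^ α * exp (-(x * u)) / (1 + (u / c) ^ 2) ≤ c ^ (2 : ℝ) * Gfun α x := by
    rw [Gfun, ← integral_const_mul]
    refine setIntegral_mono_on
      (integrableOn_rpow_mul_exp_neg_mul_div hα hx (by fun_prop) fun u => by nlinarith)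
      ((integrableOn_Gfun_integrand hα hx).const_mul _) measurableSet_Ioi fun u (hu : 0 < u) => ?_
    calc u ^ α * exp (-(x * u)) / (1 + (u / c) ^ 2)
        = c ^ (2 : ℝ) * (u ^ α * exp (-(x * u)) / (c ^ 2 + u ^ 2)) := by
          rw [rpow_two]; field_simp
      _ ≤ c ^ (2 : ℝ) * (u ^ α * exp (-(x * u)) / (1 + u ^ 2)) := by
          gcongr
          nlinarith
  calc Gfun α (c * x) ≤ c ^ (-(α + 1)) * (c ^ (2 : ℝ) * Gfun α x) := by
        rw [Gfun_mul_eq hc0]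
        gcongr
    _ = c ^ (-(α - 1)) * Gfun α x := by
        rw [← mul_assoc, ← rpow_add hc0]
        ring_nf

lemma hasSum_Ffun {α x : ℝ} (hα : 2 < α) (hx : 0 < x) :
    HasSum (fun k : ℕ => 2 * Gfun α ((2 * k + 1) * x)) (Ffun α x) := by
  set f : ℕ → ℝ → ℝ := fun k t => 2 * (t ^ α * exp (-((2 * k + 1) * x * t)) / (1 + t ^ 2))
  have hodd_pos : ∀ k : ℕ, (0 : ℝ) < 2 * k + 1 := fun k => by positivity
  have hint : ∀ k, IntegrableOn (f k) (Ioi 0) := fun k =>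
    (integrableOn_Gfun_integrand (by linarith) (mul_pos (hodd_pos k) hx)).const_mul 2
  have hintegral : ∀ k, ∫ t in Ioi 0, f k t = 2 * Gfun α ((2 * k + 1) * x) := fun k =>
    integral_const_mul _ _
  have hnorm : ∀ k, ∫ t in Ioi 0, ‖f k t‖ = 2 * Gfun α ((2 * k + 1) * x) := fun k => by
    rw [← hintegral]
    refine setIntegral_congr_fun measurableSet_Ioi fun t (ht : 0 < t) => norm_of_nonneg ?_
    positivity
  have hsummable : Summable fun k : ℕ => 2 * Gfun α ((2 * k + 1) * x) := by
    refine Summable.of_nonneg_of_le (fun k => mul_nonneg zero_le_two (Gfun_nonneg _ _))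
      (fun k => ?_) (((hasSum_two_mul_odd_rpow_neg (s := α - 1) (by linarith)).mul_right
        (Gfun α x)).summable)
    rw [mul_assoc]
    gcongr
    exact Gfun_mul_le_rpow_mul_Gfun (by linarith) hx (by linarith [hodd_pos k])
  have hswap := hasSum_integral_of_summable_integral_norm (F := f)
    (μ := volume.restrict (Ioi 0)) hint (by simpa only [hnorm])
  simp only [hintegral] at hswap
  suffices hF : Ffun α x = ∫ t in Ioi 0, ∑' k, f k t by rw [hF]; exact hswap
  refine setIntegral_congr_fun measurableSet_Ioi fun t (ht : 0 < t) => ?_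
  calc t ^ α / (sinh (x * t) * (1 + t ^ 2)) = (sinh (x * t))⁻¹ * (t ^ α / (1 + t ^ 2)) := by
        rw [div_eq_mul_inv, mul_inv]; ring
    _ = ∑' k : ℕ, 2 * exp (-((2 * k + 1) * (x * t))) * (t ^ α / (1 + t ^ 2)) :=
        ((hasSum_inv_sinh (mul_pos hx ht)).mul_right _).tsum_eq.symm
    _ = ∑' k, f k t := tsum_congr fun k => by simp only [f, mul_assoc]; ring

theorem stmt_16 (α x : ℝ) (hα : 2 < α) (hx : 0 < x) :
    (2 - (2 : ℝ) ^ (-α)) * Zfun (α + 1) * Gfun α x ≤ Ffun α x ∧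
    Ffun α x ≤ (2 - (2 : ℝ) ^ (2 - α)) * Zfun (α - 1) * Gfun α x := by
  have hF := hasSum_Ffun hα hx
  have hodd : ∀ k : ℕ, (1 : ℝ) ≤ 2 * k + 1 := fun k => by linarith [k.cast_nonneg (α := ℝ)]
  constructor
  · have hlower := (hasSum_two_mul_odd_rpow_neg (s := α + 1) (by linarith)).mul_right (Gfun α x)
    rw [show 1 - (α + 1) = -α by ring] at hlower
    refine hasSum_le (fun k => ?_) hlower hF
    rw [mul_assoc]
    gcongr
    exact rpow_mul_Gfun_le_Gfun_mul (by linarith) hx (hodd k)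
  · have hupper := (hasSum_two_mul_odd_rpow_neg (s := α - 1) (by linarith)).mul_right (Gfun α x)
    rw [show 1 - (α - 1) = 2 - α by ring] at hupper
    refine hasSum_le (fun k => ?_) hF hupper
    rw [mul_assoc]
    gcongr
    exact Gfun_mul_le_rpow_mul_Gfun (by linarith) hx (hodd k)
end
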